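/- arXiv:2210.05177 — 3 statements merged into one kernel-verified Lean document; each statement's English description precedes it below -/
import Mathlib

section
/- Let f : ℝ^d → ℝ be L-smooth with ‖∇f(w)‖ ≤ G everywhere, and let (Ω, μ, g) be a stochastic gradient oracle for f with each g(ω,·) L-Lipschitz. Fix ρ > 0 and a point w with ∇f(w) ≠ 0 and g(ω, w) ≠ 0 for μ-a.e. ω. Then the SAM ascent point w_{+} (ω) = w + ρ·g(ω,w)/‖g(ω,w)‖ satisfies E_ω⟨∇f(w), g(ω, w_{+}(ω))⟩ ≥ (1/2)‖∇f(w)‖² − L²ρ² − LρG. -/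
open MeasureTheory RealInnerProductSpace

/-! The ascent point lies at distance exactly `ρ` from `w`, so by the Lipschitz property of the
oracle `g(ω, w₊(ω))` differs from `g(ω, w)` by at most `Lρ`. Pairing with `∇f(w)` and averaging,
unbiasedness turns `E⟪∇f(w), g(ω, w)⟫` into `‖∇f(w)‖²`, which gives the sharper bound
`E⟪∇f(w), g(ω, w₊(ω))⟫ ≥ ‖∇f(w)‖² − LρG`. -/

section

variable {E : Type*} [NormedAddCommGroup E] [InnerProductSpace ℝ E]

lemma norm_div_norm_smul_self {ρ : ℝ} (hρ : 0 ≤ ρ) {v : E} (hv : v ≠ 0) :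
    ‖(ρ / ‖v‖) • v‖ = ρ := by
  rw [norm_smul, Real.norm_of_nonneg (by positivity), div_mul_cancel₀ _ (norm_ne_zero_iff.mpr hv)]

lemma inner_sub_norm_mul_le_of_norm_sub_le {x y : E} {r : ℝ} (hxy : ‖y - x‖ ≤ r) (a : E) :
    ⟪a, x⟫ - ‖a‖ * r ≤ ⟪a, y⟫ := by
  have : ⟪a, x⟫ - ⟪a, y⟫ ≤ ‖a‖ * r :=
    calc ⟪a, x⟫ - ⟪a, y⟫ = ⟪a, x - y⟫ := (inner_sub_right a x y).symm
      _ ≤ ‖a‖ * ‖x - y‖ := real_inner_le_norm a _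
      _ ≤ ‖a‖ * r := by rw [norm_sub_rev]; gcongr
  linarith

lemma integral_inner_ge_of_norm_sub_le [CompleteSpace E] {Ω : Type*} [MeasurableSpace Ω]
    {μ : Measure Ω} [IsProbabilityMeasure μ] {X Y : Ω → E} {r : ℝ}
    (hX : Integrable X μ) (hY : AEStronglyMeasurable Y μ)
    (hXY : ∀ᵐ ω ∂μ, ‖Y ω - X ω‖ ≤ r) (a : E) :
    ⟪a, ∫ ω, X ω ∂μ⟫ - ‖a‖ * r ≤ ∫ ω, ⟪a, Y ω⟫ ∂μ := by
  have hYX : Integrable (fun ω => Y ω - X ω) μ := .of_bound (hY.sub hX.1) r hXY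
  have hY_int : Integrable Y μ :=
    (hYX.add hX).congr (.of_forall fun ω => sub_add_cancel (Y ω) (X ω))
  calc ⟪a, ∫ ω, X ω ∂μ⟫ - ‖a‖ * r = ∫ ω, (⟪a, X ω⟫ - ‖a‖ * r) ∂μ := by
        rw [integral_sub (hX.const_inner a) (integrable_const _), integral_const, probReal_univ,
          one_smul, integral_inner hX]
    _ ≤ ∫ ω, ⟪a, Y ω⟫ ∂μ :=
        integral_mono_ae ((hX.const_inner a).sub (integrable_const _)) (hY_int.const_inner a)
          (hXY.mono fun _ h => inner_sub_norm_mul_le_of_norm_sub_le h a)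

end

theorem sam_stochastic_ascent_inner_lower_bound_general {d : ℕ}
    (f : EuclideanSpace ℝ (Fin d) → ℝ) (L G : ℝ) (hL : 0 < L)
    (hbound : ∀ w : EuclideanSpace ℝ (Fin d), ‖gradient f w‖ ≤ G)
    (Ω : Type*) [MeasurableSpace Ω] (μ : Measure Ω) [IsProbabilityMeasure μ]
    (g : Ω → EuclideanSpace ℝ (Fin d) → EuclideanSpace ℝ (Fin d))
    (hgmeas : Measurable (Function.uncurry g))
    (hunbiased : ∀ v : EuclideanSpace ℝ (Fin d), ∫ ω, g ω v ∂μ = gradient f v)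
    (hglip : ∀ᵐ ω ∂μ, ∀ u v : EuclideanSpace ℝ (Fin d),
      ‖g ω u - g ω v‖ ≤ L * ‖u - v‖)
    (ρ : ℝ) (hρ : 0 < ρ)
    (w : EuclideanSpace ℝ (Fin d)) (hw : gradient f w ≠ 0)
    (hgw : ∀ᵐ ω ∂μ, g ω w ≠ 0) :
    (∫ ω, ⟪gradient f w, g ω (w + (ρ / ‖g ω w‖) • g ω w)⟫ ∂μ)
      ≥ (1 / 2) * ‖gradient f w‖ ^ 2 - L ^ 2 * ρ ^ 2 - L * ρ * G := by
  have hX : Integrable (fun ω => g ω w) μ := .of_integral_ne_zero (by rwa [hunbiased w])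
  have hgw_meas : Measurable fun ω => g ω w := hgmeas.comp (measurable_id.prodMk measurable_const)
  have hY : AEStronglyMeasurable (fun ω => g ω (w + (ρ / ‖g ω w‖) • g ω w)) μ :=
    (hgmeas.comp (measurable_id.prodMk (measurable_const.add
      ((measurable_const.div hgw_meas.norm).smul hgw_meas)))).aestronglyMeasurable
  have hstep : ∀ᵐ ω ∂μ, ‖g ω (w + (ρ / ‖g ω w‖) • g ω w) - g ω w‖ ≤ L * ρ := by
    filter_upwards [hglip, hgw] with ω hlip hne
    simpa [norm_div_norm_smul_self hρ.le hne] using hlip (w + (ρ / ‖g ω w‖) • g ω w) w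
  have hmean := integral_inner_ge_of_norm_sub_le hX hY hstep (gradient f w)
  rw [hunbiased w, real_inner_self_eq_norm_sq] at hmean
  have hG : ‖gradient f w‖ * (L * ρ) ≤ G * (L * ρ) :=
    mul_le_mul_of_nonneg_right (hbound w) (by positivity)
  nlinarith [sq_nonneg ‖gradient f w‖, sq_nonneg (L * ρ)]

/-- Lemma 2 (stochastic SAM ascent inner-product lower bound):
for an `L`-smooth `f` with gradients bounded by `G` and a stochastic gradient oracle
`(Ω, μ, g)` (unbiased, variance `≤ σ²`, a.e.-`L`-Lipschitz in the second argument),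
any `ρ > 0` and any `w` with `∇f(w) ≠ 0` and `g(ω, w) ≠ 0` a.e., the SAM ascent point
`w₊(ω) = w + ρ·g(ω,w)/‖g(ω,w)‖` satisfies
`E_ω ⟪∇f(w), g(ω, w₊(ω))⟫ ≥ ½‖∇f(w)‖² − L²ρ² − LρG`. -/
theorem sam_stochastic_ascent_inner_lower_bound {d : ℕ} (hd : 1 ≤ d)
    (f : EuclideanSpace ℝ (Fin d) → ℝ) (L G σ : ℝ) (hL : 0 < L) (hG : 0 ≤ G)
    (hdiff : Differentiable ℝ f)
    (hsmooth : ∀ w v : EuclideanSpace ℝ (Fin d),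
      ‖gradient f w - gradient f v‖ ≤ L * ‖w - v‖)
    (hbound : ∀ w : EuclideanSpace ℝ (Fin d), ‖gradient f w‖ ≤ G)
    (Ω : Type*) [MeasurableSpace Ω] (μ : Measure Ω) [IsProbabilityMeasure μ]
    (g : Ω → EuclideanSpace ℝ (Fin d) → EuclideanSpace ℝ (Fin d))
    (hgmeas : Measurable (Function.uncurry g))
    (hunbiased : ∀ v : EuclideanSpace ℝ (Fin d), ∫ ω, g ω v ∂μ = gradient f v)
    (hvar : ∀ v : EuclideanSpace ℝ (Fin d),
      ∫ ω, ‖g ω v - gradient f v‖ ^ 2 ∂μ ≤ σ ^ 2)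
    (hglip : ∀ᵐ ω ∂μ, ∀ u v : EuclideanSpace ℝ (Fin d),
      ‖g ω u - g ω v‖ ≤ L * ‖u - v‖)
    (ρ : ℝ) (hρ : 0 < ρ)
    (w : EuclideanSpace ℝ (Fin d)) (hw : gradient f w ≠ 0)
    (hgw : ∀ᵐ ω ∂μ, g ω w ≠ 0) :
    (∫ ω, ⟪gradient f w, g ω (w + (ρ / ‖g ω w‖) • g ω w)⟫ ∂μ)
      ≥ (1 / 2) * ‖gradient f w‖ ^ 2 - L ^ 2 * ρ ^ 2 - L * ρ * G :=
  sam_stochastic_ascent_inner_lower_bound_general f L G hL hbound Ω μ g hgmeas hunbiased hglip ρ hρ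
    w hw hgw
end

section
/- Let f : ℝ^d → ℝ be L-smooth and let h : ℝ^d → ℝ^d be any L-Lipschitz map. Fix w ∈ ℝ^d with h(w) ≠ 0, ρ > 0, η > 0, and set w_{½} = w + ρ·h(w)/‖h(w)‖. Then f(w − η·h(w_{½})) ≤ f(w) − (Lη²/2)‖∇f(w)‖² + Lη²‖∇f(w) − h(w)‖² + η²L³ρ² − (1 − Lη)·η·⟨∇f(w), h(w_{½})⟩. -/
/-!
Apply the descent lemma `f (x + v) ≤ f x + ⟪∇f x, v⟫ + L/2 ‖v‖²` to the step `v = -η g`, where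
`g = h w½`, and expand `‖g‖² = ‖g - ∇f w‖² + 2⟪∇f w, g⟫ - ‖∇f w‖²`. Since the ascent step
`w½ - w` has length at most `|ρ|`, the error `‖g - ∇f w‖` is at most `L |ρ| + ‖∇f w - h w‖`, and
`(a + b)² ≤ 2 (a² + b²)` turns its square into the two error terms of the bound.
-/

open RealInnerProductSpace

section

variable {E : Type*} [NormedAddCommGroup E] [InnerProductSpace ℝ E] [CompleteSpace E]

theorem hasDerivAt_comp_add_smul_of_differentiable {f : E → ℝ} (hf : Differentiable ℝ f)
    (x v : E) (t : ℝ) :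
    HasDerivAt (fun s : ℝ => f (x + s • v)) ⟪gradient f (x + t • v), v⟫ t := by
  have hline : HasDerivAt (fun s : ℝ => x + s • v) v t := by
    simpa using ((hasDerivAt_id t).smul_const v).const_add x
  exact (hf _).hasGradientAt.hasFDerivAt.comp_hasDerivAt t hline

theorem apply_add_le_of_norm_gradient_sub_le {f : E → ℝ} {L : ℝ} (hf : Differentiable ℝ f)
    (hsmooth : ∀ w v, ‖gradient f w - gradient f v‖ ≤ L * ‖w - v‖) (x v : E) :
    f (x + v) ≤ f x + ⟪gradient f x, v⟫ + L / 2 * ‖v‖ ^ 2 := by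
  set φ : ℝ → ℝ := fun t => f (x + t • v) - t * ⟪gradient f x, v⟫ - t ^ 2 * (L / 2 * ‖v‖ ^ 2)
  have hφ : ∀ t, HasDerivAt φ
      (⟪gradient f (x + t • v) - gradient f x, v⟫ - t * (L * ‖v‖ ^ 2)) t := by
    intro t
    have := (((hasDerivAt_comp_add_smul_of_differentiable hf x v t).sub
      ((hasDerivAt_id t).mul_const ⟪gradient f x, v⟫)).sub
      ((hasDerivAt_pow 2 t).mul_const (L / 2 * ‖v‖ ^ 2)))
    refine this.congr_deriv ?_
    rw [inner_sub_left]
    push_cast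
    ring
  have hanti : AntitoneOn φ (Set.Icc 0 1) := by
    refine antitoneOn_of_hasDerivWithinAt_nonpos (convex_Icc 0 1)
      (fun t _ => (hφ t).continuousAt.continuousWithinAt) (fun t _ => (hφ t).hasDerivWithinAt) ?_
    intro t ht
    rw [interior_Icc] at ht
    have hstep : ‖gradient f (x + t • v) - gradient f x‖ ≤ L * (t * ‖v‖) := by
      simpa [norm_smul, abs_of_pos ht.1] using hsmooth (x + t • v) x
    calc ⟪gradient f (x + t • v) - gradient f x, v⟫ - t * (L * ‖v‖ ^ 2)
        ≤ ‖gradient f (x + t • v) - gradient f x‖ * ‖v‖ - t * (L * ‖v‖ ^ 2) := by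
          gcongr; exact real_inner_le_norm _ _
      _ ≤ L * (t * ‖v‖) * ‖v‖ - t * (L * ‖v‖ ^ 2) := by gcongr
      _ = 0 := by ring
  have := hanti (by simp) (by simp) zero_le_one
  simp only [φ, zero_smul, one_smul, add_zero, zero_mul, one_mul, sub_zero, one_pow,
    zero_pow two_ne_zero] at this
  linarith

end

theorem norm_div_norm_smul_le {E : Type*} [SeminormedAddCommGroup E] [NormedSpace ℝ E]
    (ρ : ℝ) (v : E) : ‖(ρ / ‖v‖) • v‖ ≤ |ρ| := by
  rw [norm_smul, norm_div, norm_norm, Real.norm_eq_abs]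
  rcases eq_or_ne ‖v‖ 0 with hv | hv
  · simp [hv]
  · rw [div_mul_cancel₀ _ hv]

theorem sam_one_step_descent_det_general {d : ℕ}
    (f : EuclideanSpace ℝ (Fin d) → ℝ) (L : ℝ) (hL : 0 < L)
    (hdiff : Differentiable ℝ f)
    (hsmooth : ∀ w v : EuclideanSpace ℝ (Fin d),
      ‖gradient f w - gradient f v‖ ≤ L * ‖w - v‖)
    (h : EuclideanSpace ℝ (Fin d) → EuclideanSpace ℝ (Fin d))
    (hhlip : ∀ w v : EuclideanSpace ℝ (Fin d), ‖h w - h v‖ ≤ L * ‖w - v‖)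
    (w : EuclideanSpace ℝ (Fin d))
    (ρ η : ℝ) :
    f (w - η • h (w + (ρ / ‖h w‖) • h w))
      ≤ f w - (L * η ^ 2 / 2) * ‖gradient f w‖ ^ 2
        + L * η ^ 2 * ‖gradient f w - h w‖ ^ 2 + η ^ 2 * L ^ 3 * ρ ^ 2
        - (1 - L * η) * η * ⟪gradient f w, h (w + (ρ / ‖h w‖) • h w)⟫ := by
  set g := h (w + (ρ / ‖h w‖) • h w)
  have hperturb : ‖g - gradient f w‖ ≤ L * |ρ| + ‖gradient f w - h w‖ :=
    calc ‖g - gradient f w‖ ≤ ‖g - h w‖ + ‖h w - gradient f w‖ :=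
          norm_sub_le_norm_sub_add_norm_sub _ _ _
      _ ≤ L * |ρ| + ‖gradient f w - h w‖ := by
          rw [norm_sub_rev (h w)]
          gcongr
          calc ‖g - h w‖ ≤ L * ‖(ρ / ‖h w‖) • h w‖ := by
                simpa using hhlip (w + (ρ / ‖h w‖) • h w) w
            _ ≤ L * |ρ| := by gcongr; exact norm_div_norm_smul_le ρ (h w)
  have hsq : ‖g - gradient f w‖ ^ 2 ≤ 2 * (L ^ 2 * ρ ^ 2 + ‖gradient f w - h w‖ ^ 2) := by
    calc ‖g - gradient f w‖ ^ 2 ≤ (L * |ρ| + ‖gradient f w - h w‖) ^ 2 := by gcongr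
      _ ≤ 2 * ((L * |ρ|) ^ 2 + ‖gradient f w - h w‖ ^ 2) := add_sq_le
      _ = 2 * (L ^ 2 * ρ ^ 2 + ‖gradient f w - h w‖ ^ 2) := by rw [mul_pow, sq_abs]
  calc f (w - η • g) = f (w + -(η • g)) := by rw [sub_eq_add_neg]
    _ ≤ f w + ⟪gradient f w, -(η • g)⟫ + L / 2 * ‖-(η • g)‖ ^ 2 :=
        apply_add_le_of_norm_gradient_sub_le hdiff hsmooth w _
    _ = f w - (1 - L * η) * η * ⟪gradient f w, g⟫ - (L * η ^ 2 / 2) * ‖gradient f w‖ ^ 2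
          + (L * η ^ 2 / 2) * ‖g - gradient f w‖ ^ 2 := by
        rw [inner_neg_right, real_inner_smul_right, norm_neg, norm_smul, mul_pow,
          Real.norm_eq_abs, sq_abs, norm_sub_sq_real, real_inner_comm]
        ring
    _ ≤ _ := by linarith [mul_le_mul_of_nonneg_left hsq (by positivity : 0 ≤ L * η ^ 2 / 2)]

/-- Deterministic one-step SAM descent inequality: for `L`-smooth `f`, any `L`-Lipschitz
map `h`, `w` with `h(w) ≠ 0`, `ρ > 0`, `η > 0`, and `w½ = w + ρ·h(w)/‖h(w)‖`, we have
`f(w − η·h(w½)) ≤ f(w) − (Lη²/2)‖∇f(w)‖² + Lη²‖∇f(w) − h(w)‖² + η²L³ρ²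
  − (1 − Lη)·η·⟪∇f(w), h(w½)⟫`. -/
theorem sam_one_step_descent_det {d : ℕ} (hd : 1 ≤ d)
    (f : EuclideanSpace ℝ (Fin d) → ℝ) (L : ℝ) (hL : 0 < L)
    (hdiff : Differentiable ℝ f)
    (hsmooth : ∀ w v : EuclideanSpace ℝ (Fin d),
      ‖gradient f w - gradient f v‖ ≤ L * ‖w - v‖)
    (h : EuclideanSpace ℝ (Fin d) → EuclideanSpace ℝ (Fin d))
    (hhlip : ∀ w v : EuclideanSpace ℝ (Fin d), ‖h w - h v‖ ≤ L * ‖w - v‖)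
    (w : EuclideanSpace ℝ (Fin d)) (hw : h w ≠ 0)
    (ρ η : ℝ) (hρ : 0 < ρ) (hη : 0 < η) :
    f (w - η • h (w + (ρ / ‖h w‖) • h w))
      ≤ f w - (L * η ^ 2 / 2) * ‖gradient f w‖ ^ 2
        + L * η ^ 2 * ‖gradient f w - h w‖ ^ 2 + η ^ 2 * L ^ 3 * ρ ^ 2
        - (1 - L * η) * η * ⟪gradient f w, h (w + (ρ / ‖h w‖) • h w)⟫ :=
  sam_one_step_descent_det_general f L hL hdiff hsmooth h hhlip w ρ η
end

section
/- Let f : ℝ^d → ℝ be L-smooth with ‖∇f(w)‖ ≤ G everywhere, and let (Ω, μ, g) be a stochastic gradient oracle for f with each g(ω,·) L-Lipschitz. Fix ρ > 0, a mask m ∈ {0,1}^d, and a point w with ∇f(w) ≠ 0 and g(ω, w) ≠ 0 for μ-a.e. ω. Define the sparse ascent point w̃(ω) = w + ρ·(g(ω,w)/‖g(ω,w)‖) ⊙ m and the error e(ω) = ρ·(g(ω,w)/‖g(ω,w)‖) ⊙ (1 − m). Then E_ω⟨∇f(w), g(ω, w̃(ω))⟩ ≥ (1/2)‖∇f(w)‖²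 − 2L²ρ² − LρG − L²·E_ω‖e(ω)‖². -/
/-!
Replacing the gradient query point `w` by the ascent point `w̃(ω)` moves `g(ω, ·)` by at most
`L‖w̃(ω) - w‖ ≤ Lρ`, because masking and normalising do not increase norms. Hence
`⟪∇f(w), g(ω, w̃(ω))⟫` and `⟪∇f(w), g(ω, w)⟫` differ in mean by at most `‖∇f(w)‖Lρ ≤ GLρ`,
and unbiasedness gives `E⟪∇f(w), g(ω, w)⟫ = ‖∇f(w)‖²`, which exceeds the claimed bound.
-/

open MeasureTheory RealInnerProductSpace

noncomputable def hadamard {d : ℕ} (x y : EuclideanSpace ℝ (Fin d)) :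
    EuclideanSpace ℝ (Fin d) :=
  (EuclideanSpace.equiv (Fin d) ℝ).symm (fun i => x i * y i)

noncomputable def onesVec (d : ℕ) : EuclideanSpace ℝ (Fin d) :=
  (EuclideanSpace.equiv (Fin d) ℝ).symm (fun _ => 1)

lemma hadamard_apply {d : ℕ} (x y : EuclideanSpace ℝ (Fin d)) (i : Fin d) :
    hadamard x y i = x i * y i := rfl

lemma continuous_hadamard_right {d : ℕ} (m : EuclideanSpace ℝ (Fin d)) :
    Continuous fun x : EuclideanSpace ℝ (Fin d) => hadamard x m := by
  unfold hadamard
  fun_prop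

lemma norm_hadamard_le_of_mask {d : ℕ} (x m : EuclideanSpace ℝ (Fin d))
    (hm : ∀ i, m i = 0 ∨ m i = 1) : ‖hadamard x m‖ ≤ ‖x‖ := by
  rw [EuclideanSpace.norm_eq, EuclideanSpace.norm_eq]
  refine Real.sqrt_le_sqrt (Finset.sum_le_sum fun i _ => ?_)
  rcases hm i with h | h <;> simp [hadamard_apply, h, sq_nonneg]

lemma norm_smul_div_norm_le {E : Type*} [NormedAddCommGroup E] [NormedSpace ℝ E]
    {ρ : ℝ} (hρ : 0 ≤ ρ) (x : E) : ‖(ρ / ‖x‖) • x‖ ≤ ρ := by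
  rcases eq_or_ne x 0 with rfl | hx
  · simpa using hρ
  · rw [norm_smul, Real.norm_eq_abs, abs_div, abs_of_nonneg hρ, abs_norm,
      div_mul_cancel₀ _ (norm_ne_zero_iff.mpr hx)]

section BoundedPerturbation

variable {Ω E : Type*} [MeasurableSpace Ω] {μ : Measure Ω} [IsProbabilityMeasure μ]
  [NormedAddCommGroup E] [InnerProductSpace ℝ E] [CompleteSpace E]

lemma inner_integral_sub_le_integral_inner_of_ae_norm_sub_le (a : E) {X Y : Ω → E} {r : ℝ}
    (hX : Integrable X μ) (hY : AEStronglyMeasurable Y μ)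
    (hXY : ∀ᵐ ω ∂μ, ‖Y ω - X ω‖ ≤ r) :
    ⟪a, ∫ ω, X ω ∂μ⟫ - ‖a‖ * r ≤ ∫ ω, ⟪a, Y ω⟫ ∂μ := by
  have hYX : Integrable (fun ω => Y ω - X ω) μ :=
    (integrable_const r).mono' (hY.sub hX.aestronglyMeasurable) hXY
  have hYint : Integrable Y μ :=
    (hYX.add hX).congr (ae_of_all _ fun ω => sub_add_cancel (Y ω) (X ω))
  have hmean : ‖∫ ω, (Y ω - X ω) ∂μ‖ ≤ r := by
    simpa using norm_integral_le_of_norm_le_const hXY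
  calc ⟪a, ∫ ω, X ω ∂μ⟫ - ‖a‖ * r
      ≤ ⟪a, ∫ ω, X ω ∂μ⟫ + ⟪a, ∫ ω, (Y ω - X ω) ∂μ⟫ := by
        nlinarith [neg_le_of_abs_le (abs_real_inner_le_norm a (∫ ω, (Y ω - X ω) ∂μ)),
          mul_le_mul_of_nonneg_left hmean (norm_nonneg a)]
    _ = ⟪a, ∫ ω, Y ω ∂μ⟫ := by rw [integral_sub hYint hX, inner_sub_right]; ring
    _ = ∫ ω, ⟪a, Y ω⟫ ∂μ := (integral_inner hYint a).symm

lemma norm_sq_sub_le_integral_inner_of_integral_eq {a : E} {X Y : Ω → E} {r : ℝ}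
    (ha : ∫ ω, X ω ∂μ = a) (hY : AEStronglyMeasurable Y μ)
    (hXY : ∀ᵐ ω ∂μ, ‖Y ω - X ω‖ ≤ r) :
    ‖a‖ ^ 2 - ‖a‖ * r ≤ ∫ ω, ⟪a, Y ω⟫ ∂μ := by
  by_cases hX : Integrable X μ
  · simpa [ha, real_inner_self_eq_norm_sq] using
      inner_integral_sub_le_integral_inner_of_ae_norm_sub_le a hX hY hXY
  -- The Bochner integral of a non-integrable function is `0`, so then `a = 0`.
  · rw [integral_undef hX] at ha
    simp [← ha]

end BoundedPerturbation

theorem ssam_ascent_inner_lower_bound_general {d : ℕ}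
    (f : EuclideanSpace ℝ (Fin d) → ℝ) (L G : ℝ) (hL : 0 < L)
    (hbound : ∀ w : EuclideanSpace ℝ (Fin d), ‖gradient f w‖ ≤ G)
    (Ω : Type*) [MeasurableSpace Ω] (μ : Measure Ω) [IsProbabilityMeasure μ]
    (g : Ω → EuclideanSpace ℝ (Fin d) → EuclideanSpace ℝ (Fin d))
    (hgmeas : Measurable (Function.uncurry g))
    (hunbiased : ∀ v : EuclideanSpace ℝ (Fin d), ∫ ω, g ω v ∂μ = gradient f v)
    (hglip : ∀ᵐ ω ∂μ, ∀ u v : EuclideanSpace ℝ (Fin d),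
      ‖g ω u - g ω v‖ ≤ L * ‖u - v‖)
    (ρ : ℝ) (hρ : 0 < ρ)
    (m : EuclideanSpace ℝ (Fin d)) (hm : ∀ i, m i = 0 ∨ m i = 1)
    (w : EuclideanSpace ℝ (Fin d)) :
    (∫ ω, ⟪gradient f w,
        g ω (w + hadamard ((ρ / ‖g ω w‖) • g ω w) m)⟫ ∂μ)
      ≥ (1 / 2) * ‖gradient f w‖ ^ 2 - 2 * L ^ 2 * ρ ^ 2 - L * ρ * G
        - L ^ 2 * ∫ ω, ‖hadamard ((ρ / ‖g ω w‖) • g ω w) (onesVec d - m)‖ ^ 2 ∂μ := by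
  have hgw : Measurable fun ω => g ω w := hgmeas.comp (measurable_id.prodMk measurable_const)
  have hascent : AEStronglyMeasurable
      (fun ω => g ω (w + hadamard ((ρ / ‖g ω w‖) • g ω w) m)) μ :=
    (hgmeas.comp (measurable_id.prodMk (measurable_const.add
      ((continuous_hadamard_right m).measurable.comp
        ((measurable_const.div hgw.norm).smul hgw))))).aestronglyMeasurable
  have hmove : ∀ᵐ ω ∂μ,
      ‖g ω (w + hadamard ((ρ / ‖g ω w‖) • g ω w) m) - g ω w‖ ≤ L * ρ := by
    filter_upwards [hglip] with ω hlip
    calc _ ≤ L * ‖hadamard ((ρ / ‖g ω w‖) • g ω w) m‖ := by simpa using hlip (w + _) w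
      _ ≤ L * ρ := mul_le_mul_of_nonneg_left ((norm_hadamard_le_of_mask _ m hm).trans
          (norm_smul_div_norm_le hρ.le _)) hL.le
  have hmean := norm_sq_sub_le_integral_inner_of_integral_eq (hunbiased w) hascent hmove
  have herr : 0 ≤ ∫ ω, ‖hadamard ((ρ / ‖g ω w‖) • g ω w) (onesVec d - m)‖ ^ 2 ∂μ :=
    integral_nonneg fun _ => sq_nonneg _
  have hGρ := mul_le_mul_of_nonneg_right (hbound w) (mul_pos hL hρ).le
  nlinarith [sq_nonneg ‖gradient f w‖, sq_nonneg (L * ρ), mul_nonneg (sq_nonneg L) herr]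

/-- Lemma 4 (sparse SAM ascent inner-product lower bound): with a mask `m ∈ {0,1}^d`,
sparse ascent point `w̃(ω) = w + ρ·(g(ω,w)/‖g(ω,w)‖) ⊙ m` and error
`e(ω) = ρ·(g(ω,w)/‖g(ω,w)‖) ⊙ (1 − m)`, we have
`E_ω ⟪∇f(w), g(ω, w̃(ω))⟫ ≥ ½‖∇f(w)‖² − 2L²ρ² − LρG − L²·E_ω‖e(ω)‖²`. -/
theorem ssam_ascent_inner_lower_bound {d : ℕ} (hd : 1 ≤ d)
    (f : EuclideanSpace ℝ (Fin d) → ℝ) (L G σ : ℝ) (hL : 0 < L) (hG : 0 ≤ G)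
    (hdiff : Differentiable ℝ f)
    (hsmooth : ∀ w v : EuclideanSpace ℝ (Fin d),
      ‖gradient f w - gradient f v‖ ≤ L * ‖w - v‖)
    (hbound : ∀ w : EuclideanSpace ℝ (Fin d), ‖gradient f w‖ ≤ G)
    (Ω : Type*) [MeasurableSpace Ω] (μ : Measure Ω) [IsProbabilityMeasure μ]
    (g : Ω → EuclideanSpace ℝ (Fin d) → EuclideanSpace ℝ (Fin d))
    (hgmeas : Measurable (Function.uncurry g))
    (hunbiased : ∀ v : EuclideanSpace ℝ (Fin d), ∫ ω, g ω v ∂μ = gradient f v)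
    (hvar : ∀ v : EuclideanSpace ℝ (Fin d),
      ∫ ω, ‖g ω v - gradient f v‖ ^ 2 ∂μ ≤ σ ^ 2)
    (hglip : ∀ᵐ ω ∂μ, ∀ u v : EuclideanSpace ℝ (Fin d),
      ‖g ω u - g ω v‖ ≤ L * ‖u - v‖)
    (ρ : ℝ) (hρ : 0 < ρ)
    (m : EuclideanSpace ℝ (Fin d)) (hm : ∀ i, m i = 0 ∨ m i = 1)
    (w : EuclideanSpace ℝ (Fin d)) (hw : gradient f w ≠ 0)
    (hgw : ∀ᵐ ω ∂μ, g ω w ≠ 0) :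
    (∫ ω, ⟪gradient f w,
        g ω (w + hadamard ((ρ / ‖g ω w‖) • g ω w) m)⟫ ∂μ)
      ≥ (1 / 2) * ‖gradient f w‖ ^ 2 - 2 * L ^ 2 * ρ ^ 2 - L * ρ * G
        - L ^ 2 * ∫ ω, ‖hadamard ((ρ / ‖g ω w‖) • g ω w) (onesVec d - m)‖ ^ 2 ∂μ :=
  ssam_ascent_inner_lower_bound_general f L G hL hbound Ω μ g hgmeas hunbiased hglip ρ hρ m hm w
end
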